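/- The lift ȷ_l(x,y,p,q,z; y₁,p₁,q₁,z₁) = (x,y,p,q,z, r) with r = (2qp₁ − z₁ − q²)/(2(y₁ − p)), defined when y₁ ≠ p, satisfies: the vector Y = ∂x + p∂y + q∂p + q²∂z + r∂q is g-orthogonal to X = ∂x + y₁∂y + p₁∂p + q₁∂q + z₁∂z, where g = q²dx² − 2q dx dp + 6p dx dq − 3 dx dz − 6 dy dq + 4 dp². -/
import Mathlib


/- ℝ⁵ with coordinates (x,y,p,q,z) = indices (0,1,2,3,4). -/

/-- The Nurowski metric representative g = q²dx² − 2q dx dp + 6p dx dq − 3 dx dz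
− 6 dy dq + 4 dp², as a symmetric bilinear form at the point `pt`. -/
noncomputable def gMetric (pt v w : Fin 5 → ℝ) : ℝ :=
  (pt 3)^2 * v 0 * w 0
    - pt 3 * (v 0 * w 2 + v 2 * w 0)
    + 3 * pt 2 * (v 0 * w 3 + v 3 * w 0)
    - (3/2) * (v 0 * w 4 + v 4 * w 0)
    - 3 * (v 1 * w 3 + v 3 * w 1)
    + 4 * v 2 * w 2

/-- The lift ȷ_l: with r = (2qp₁ − z₁ − q²)/(2(y₁ − p)) (defined when y₁ ≠ p),
the vector Y = ∂x + p∂y + q∂p + q²∂z + r∂q is g-orthogonal to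
X = ∂x + y₁∂y + p₁∂p + q₁∂q + z₁∂z. -/
theorem lift_orthogonality (pt : Fin 5 → ℝ) (y1 p1 q1 z1 : ℝ)
    (h : y1 ≠ pt 2) :
    gMetric pt
      ![1, y1, p1, q1, z1]
      ![1, pt 2, pt 3,
        (2 * pt 3 * p1 - z1 - (pt 3)^2) / (2 * (y1 - pt 2)),
        (pt 3)^2] = 0 := by
  have h2 : y1 - pt 2 ≠ 0 := sub_ne_zero.mpr h
  simp only [gMetric, Matrix.cons_val_zero, Matrix.cons_val_one, Matrix.head_cons,
    Matrix.cons_val_two, Matrix.tail_cons, Matrix.cons_val_three, Matrix.cons_val_four]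
  field_simp
  ring
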